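/- arXiv:1303.3386 — 5 statements merged into one kernel-verified Lean document; each statement's English description precedes it below -/
import Mathlib

section
/- LP_k is a relaxation of RBM: for every feasible schedule M of an RBM instance I with buffer size k, there exists a feasible 0/1-valued solution x of LP_k whose value Σ_{(I,j)} x_{I,j} equals the cost of M. In particular, the optimal value of LP_k is at most opt_k(I). -/
open MeasureTheory

/-- An RBM instance: `n` items, with the color of item `i ∈ {1,…,n}` given by `color i`. -/
structure RBMInstance where
  n : ℕ
  color : ℕ → ℕ

/-- A feasible schedule with buffer size `k`: a bijection `M` from the items `{1,…,n}`
to the output slots `{k+1,…,k+n}` with `M i > i`, preserving the input order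
within each color. -/
def IsSchedule (k : ℕ) (inst : RBMInstance) (M : ℕ → ℕ) : Prop :=
  Set.BijOn M (Set.Icc 1 inst.n) (Set.Icc (k + 1) (k + inst.n)) ∧
  (∀ i ∈ Set.Icc 1 inst.n, i < M i) ∧
  (∀ i ∈ Set.Icc 1 inst.n, ∀ i' ∈ Set.Icc 1 inst.n,
      i < i' → inst.color i = inst.color i' → M i < M i')

open Classical in
/-- The cost of a schedule: `1` plus the number of color changes between consecutive
output slots (and `0` if there are no items). -/
noncomputable def scheduleCost (k : ℕ) (inst : RBMInstance) (M : ℕ → ℕ) : ℕ :=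
  if inst.n = 0 then 0
  else 1 + ((Finset.Icc (k + 1) (k + inst.n - 1)).filter fun j =>
      ∃ i ∈ Finset.Icc 1 inst.n, ∃ i' ∈ Finset.Icc 1 inst.n,
        M i = j ∧ M i' = j + 1 ∧ inst.color i ≠ inst.color i').card

/-- The optimal (offline) cost of an RBM instance with buffer size `k`. -/
noncomputable def optCost (k : ℕ) (inst : RBMInstance) : ℕ :=
  sInf {v : ℕ | ∃ M, IsSchedule k inst M ∧ scheduleCost k inst M = v}

/-- A batch `(I, j)`: a nonempty set `I ⊆ {1,…,n}` of items of a single color containing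
every item of that color between `min I` and `max I`, together with a starting output
slot `j ≥ k+1` such that the batch fits before slot `k+n` and the `r`-th smallest item
`i_r` of `I` satisfies `i_r < j + r - 1`. -/
def IsBatch (k : ℕ) (inst : RBMInstance) (b : Finset ℕ × ℕ) : Prop :=
  b.1.Nonempty ∧ b.1 ⊆ Finset.Icc 1 inst.n ∧
  (∀ i ∈ b.1, ∀ i' ∈ b.1, inst.color i = inst.color i') ∧
  (∀ i' ∈ Finset.Icc 1 inst.n, (∃ a ∈ b.1, a ≤ i') → (∃ a ∈ b.1, i' ≤ a) →
      (∃ a ∈ b.1, inst.color i' = inst.color a) → i' ∈ b.1) ∧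
  k + 1 ≤ b.2 ∧ b.2 + b.1.card - 1 ≤ k + inst.n ∧
  (∀ s : ℕ, ∀ h : s < (b.1.sort (· ≤ ·)).length,
      (b.1.sort (· ≤ ·)).get ⟨s, h⟩ < b.2 + s)

open Classical in
/-- The (finite) set of all batches of an instance. -/
noncomputable def batches (k : ℕ) (inst : RBMInstance) : Finset (Finset ℕ × ℕ) :=
  ((Finset.Icc 1 inst.n).powerset ×ˢ Finset.Icc (k + 1) (k + inst.n)).filter
    (IsBatch k inst)

open Classical in
/-- Feasibility for the primal linear program `LP_k`: nonnegativity, the covering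
constraints for every item, and the packing constraints for every output slot. -/
noncomputable def LPFeasible (k : ℕ) (inst : RBMInstance) (x : Finset ℕ × ℕ → ℝ) : Prop :=
  (∀ b, 0 ≤ x b) ∧
  (∀ i ∈ Finset.Icc 1 inst.n,
      1 ≤ ∑ b ∈ (batches k inst).filter (fun b => i ∈ b.1), x b) ∧
  (∀ j ∈ Finset.Icc (k + 1) (k + inst.n),
      ∑ b ∈ (batches k inst).filter (fun b => b.2 ≤ j ∧ j < b.2 + b.1.card), x b ≤ 1)

/-- Feasibility for the dual linear program `DP_k`. -/
def DPFeasible (k : ℕ) (inst : RBMInstance) (y z : ℕ → ℝ) : Prop :=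
  (∀ i, 0 ≤ y i) ∧ (∀ j, 0 ≤ z j) ∧
  ∀ b ∈ batches k inst,
    ∑ i ∈ b.1, y i - ∑ j' ∈ Finset.Ico b.2 (b.2 + b.1.card), z j' ≤ 1

namespace LPRelax

attribute [local instance] Classical.propDecidable

noncomputable def g (inst : RBMInstance) (M : ℕ → ℕ) : ℕ → ℕ :=
  Function.invFunOn M (Set.Icc 1 inst.n)

noncomputable def sc (inst : RBMInstance) (M : ℕ → ℕ) (j : ℕ) : ℕ :=
  inst.color (g inst M j)

def isStart (k : ℕ) (inst : RBMInstance) (M : ℕ → ℕ) (j : ℕ) : Prop :=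
  j = k + 1 ∨ sc inst M j ≠ sc inst M (j - 1)

open Classical in
noncomputable def st (k : ℕ) (inst : RBMInstance) (M : ℕ → ℕ) (j : ℕ) : ℕ :=
  Nat.findGreatest (fun s => k + 1 ≤ s ∧ isStart k inst M s) j

open Classical in
noncomputable def en (k : ℕ) (inst : RBMInstance) (M : ℕ → ℕ) (j : ℕ) : ℕ :=
  j + Nat.find (p := fun d => k + inst.n ≤ j + d ∨ isStart k inst M (j + d + 1))
    ⟨k + inst.n, Or.inl (Nat.le_add_left _ _)⟩

variable {k : ℕ} {inst : RBMInstance} {M : ℕ → ℕ}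

theorem g_mem (hM : IsSchedule k inst M) {j : ℕ}
    (hj : j ∈ Set.Icc (k+1) (k+inst.n)) : g inst M j ∈ Set.Icc 1 inst.n :=
  hM.1.surjOn.mapsTo_invFunOn hj

theorem g_right (hM : IsSchedule k inst M) {j : ℕ}
    (hj : j ∈ Set.Icc (k+1) (k+inst.n)) : M (g inst M j) = j :=
  hM.1.invOn_invFunOn.2 hj

theorem g_left (hM : IsSchedule k inst M) {i : ℕ}
    (hi : i ∈ Set.Icc 1 inst.n) : g inst M (M i) = i :=
  hM.1.invOn_invFunOn.1 hi

theorem isStart_base : isStart k inst M (k+1) := Or.inl rfl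

theorem st_le {j : ℕ} : st k inst M j ≤ j := Nat.findGreatest_le _

theorem le_st {j : ℕ} (hj : k+1 ≤ j) : k+1 ≤ st k inst M j :=
  Nat.le_findGreatest hj ⟨le_rfl, isStart_base⟩

theorem st_isStart {j : ℕ} (hj : k+1 ≤ j) : isStart k inst M (st k inst M j) :=
  (Nat.findGreatest_spec (P := fun s => k + 1 ≤ s ∧ isStart k inst M s) hj
    ⟨le_rfl, isStart_base⟩).2

theorem st_greatest {j s : ℕ} (hks : k+1 ≤ s) (h1 : st k inst M j < s) (h2 : s ≤ j) :
    ¬ isStart k inst M s := fun hs =>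
  absurd (Nat.le_findGreatest h2 ⟨hks, hs⟩) (not_le.2 h1)

theorem st_start_self {s : ℕ} (h1 : k+1 ≤ s) (h2 : isStart k inst M s) :
    st k inst M s = s :=
  le_antisymm st_le (Nat.le_findGreatest le_rfl ⟨h1, h2⟩)

theorem le_en {j : ℕ} : j ≤ en k inst M j := Nat.le_add_right _ _

theorem en_le {j : ℕ} (hj : j ≤ k + inst.n) : en k inst M j ≤ k + inst.n := by
  have := Nat.find_min' (p := fun d => k + inst.n ≤ j + d ∨ isStart k inst M (j + d + 1))
    ⟨k + inst.n, Or.inl (Nat.le_add_left _ _)⟩ (m := k + inst.n - j) (Or.inl (by omega))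
  unfold en; omega

theorem en_stop {j : ℕ} :
    k + inst.n ≤ en k inst M j ∨ isStart k inst M (en k inst M j + 1) :=
  Nat.find_spec (p := fun d => k + inst.n ≤ j + d ∨ isStart k inst M (j + d + 1))
    ⟨k + inst.n, Or.inl (Nat.le_add_left _ _)⟩

theorem en_min {j e : ℕ} (h1 : j ≤ e) (h2 : e < en k inst M j) :
    ¬(k + inst.n ≤ e ∨ isStart k inst M (e + 1)) := by
  have := Nat.find_min (p := fun d => k + inst.n ≤ j + d ∨ isStart k inst M (j + d + 1))
    ⟨k + inst.n, Or.inl (Nat.le_add_left _ _)⟩ (m := e - j) (by unfold en at h2; omega)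
  simpa [Nat.add_sub_cancel' h1] using this

theorem no_start {j s : ℕ} (hj1 : k+1 ≤ j) (hj2 : j ≤ k + inst.n)
    (h1 : st k inst M j < s) (h2 : s ≤ en k inst M j) : ¬ isStart k inst M s := by
  have hks : k + 1 ≤ s := by
    have := le_st (M := M) (inst := inst) hj1; omega
  rcases le_or_gt s j with h | h
  · exact st_greatest hks h1 h
  · have hle : j ≤ s - 1 := by omega
    have hlt : s - 1 < en k inst M j := by omega
    have hmin := en_min hle hlt
    intro hs
    have h0 : s - 1 + 1 = s := by omega
    exact hmin (Or.inr (h0.symm ▸ hs))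

theorem run_invariant {j j' : ℕ} (hj1 : k+1 ≤ j) (hj2 : j ≤ k + inst.n)
    (h1 : st k inst M j ≤ j') (h2 : j' ≤ en k inst M j) :
    st k inst M j' = st k inst M j ∧ en k inst M j' = en k inst M j := by
  have hstj1 : k + 1 ≤ st k inst M j := le_st hj1
  have hstj : isStart k inst M (st k inst M j) := st_isStart hj1
  have hj'1 : k + 1 ≤ j' := le_trans hstj1 h1
  have hj'2 : j' ≤ k + inst.n := le_trans h2 (en_le hj2)
  have hen_le : en k inst M j ≤ k + inst.n := en_le hj2
  constructor
  · have hst_le : st k inst M j ≤ st k inst M j' := Nat.le_findGreatest h1 ⟨hstj1, hstj⟩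
    rcases eq_or_lt_of_le hst_le with h | h
    · exact h.symm
    · exact absurd (st_isStart hj'1)
        (no_start hj1 hj2 h (le_trans (st_le (j := j')) h2))
  · have hub : en k inst M j' ≤ en k inst M j := by
      have := Nat.find_min' (p := fun d => k + inst.n ≤ j' + d ∨ isStart k inst M (j' + d + 1))
        ⟨k + inst.n, Or.inl (Nat.le_add_left _ _)⟩ (m := en k inst M j - j')
        (by
          have := en_stop (k := k) (inst := inst) (M := M) (j := j)
          rcases this with h | h
          · exact Or.inl (by omega)
          · exact Or.inr (by rw [show j' + (en k inst M j - j') + 1 = en k inst M j + 1 by omega]; exact h))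
      unfold en at *; omega
    rcases eq_or_lt_of_le hub with h | h
    · exact h
    · exfalso
      rcases en_stop (k := k) (inst := inst) (M := M) (j := j') with hst | hst
      · omega
      · exact no_start hj1 hj2 (by have := le_en (k := k) (inst := inst) (M := M) (j := j'); omega)
          (by omega) hst

theorem sc_run_const {j j' : ℕ} (hj1 : k+1 ≤ j) (hj2 : j ≤ k + inst.n)
    (h1 : st k inst M j ≤ j') (h2 : j' ≤ en k inst M j) :
    sc inst M j' = sc inst M (st k inst M j) := by
  induction j', h1 using Nat.le_induction with
  | base => rfl
  | succ j' hle ih =>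
    have hns : ¬ isStart k inst M (j' + 1) := no_start hj1 hj2 (by omega) h2
    rw [isStart] at hns
    push_neg at hns
    have : sc inst M (j' + 1) = sc inst M j' := by
      have := hns.2; simpa using not_not.mp (by simpa using this)
    rw [this, ih (by omega)]

noncomputable def runSet (k : ℕ) (inst : RBMInstance) (M : ℕ → ℕ) (s : ℕ) : Finset ℕ :=
  (Finset.Icc s (en k inst M s)).image (g inst M)

noncomputable def B (k : ℕ) (inst : RBMInstance) (M : ℕ → ℕ) (s : ℕ) : Finset ℕ × ℕ :=
  (runSet k inst M s, s)

section BatchProps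

variable (hM : IsSchedule k inst M) {s : ℕ} (hs1 : k+1 ≤ s) (hs2 : s ≤ k + inst.n)
  (hs : isStart k inst M s)

include hM hs1 hs2

theorem slot_mem {j : ℕ} (h1 : s ≤ j) (h2 : j ≤ en k inst M s) :
    j ∈ Set.Icc (k+1) (k+inst.n) := by
  have := en_le (k := k) (inst := inst) (M := M) hs2
  simp only [Set.mem_Icc]; omega

include hs

theorem sc_const {j : ℕ} (h1 : s ≤ j) (h2 : j ≤ en k inst M s) :
    sc inst M j = sc inst M s := by
  have hst : st k inst M s = s := st_start_self hs1 hs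
  have := sc_run_const (M := M) hs1 hs2 (j' := j) (by omega) h2
  rwa [hst] at this

theorem g_mono_run {j j' : ℕ} (h1 : s ≤ j) (h2 : j ≤ en k inst M s)
    (h1' : s ≤ j') (h2' : j' ≤ en k inst M s) (hlt : j < j') :
    g inst M j < g inst M j' := by
  have hjm := slot_mem hM hs1 hs2 h1 h2
  have hjm' := slot_mem hM hs1 hs2 h1' h2'
  have hg := g_mem hM hjm
  have hg' := g_mem hM hjm'
  have hc : inst.color (g inst M j) = inst.color (g inst M j') := by
    have e1 := sc_const hM hs1 hs2 hs h1 h2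
    have e2 := sc_const hM hs1 hs2 hs h1' h2'
    unfold sc at e1 e2; rw [e1, e2]
  rcases lt_trichotomy (g inst M j) (g inst M j') with h | h | h
  · exact h
  · exfalso; have := congrArg M h; rw [g_right hM hjm, g_right hM hjm'] at this; omega
  · exfalso
    have := hM.2.2 _ hg' _ hg h hc.symm
    rw [g_right hM hjm, g_right hM hjm'] at this; omega

theorem runSet_card : (runSet k inst M s).card = en k inst M s + 1 - s := by
  rw [runSet, Finset.card_image_of_injOn, Nat.card_Icc]
  intro a ha b hb hab
  simp only [Finset.coe_Icc, Set.mem_Icc] at ha hb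
  have e1 := g_right hM (slot_mem hM hs1 hs2 ha.1 ha.2)
  have e2 := g_right hM (slot_mem hM hs1 hs2 hb.1 hb.2)
  rw [← e1, ← e2, hab]

theorem mem_runSet {i : ℕ} :
    i ∈ runSet k inst M s ↔ ∃ j, s ≤ j ∧ j ≤ en k inst M s ∧ g inst M j = i := by
  simp [runSet, Finset.mem_image, Finset.mem_Icc, and_assoc]

theorem runSet_subset : runSet k inst M s ⊆ Finset.Icc 1 inst.n := by
  intro i hi
  rw [mem_runSet hM hs1 hs2 hs] at hi
  obtain ⟨j, h1, h2, rfl⟩ := hi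
  have := g_mem hM (slot_mem hM hs1 hs2 h1 h2)
  simpa [Finset.mem_Icc, Set.mem_Icc] using this

theorem runSet_color {i : ℕ} (hi : i ∈ runSet k inst M s) :
    inst.color i = sc inst M s := by
  rw [mem_runSet hM hs1 hs2 hs] at hi
  obtain ⟨j, h1, h2, rfl⟩ := hi
  exact sc_const hM hs1 hs2 hs h1 h2

theorem isBatch_B : IsBatch k inst (B k inst M s) := by
  have hcard := runSet_card hM hs1 hs2 hs
  have hen2 : en k inst M s ≤ k + inst.n := en_le hs2
  have hen1 : s ≤ en k inst M s := le_en
  refine ⟨?_, runSet_subset hM hs1 hs2 hs, ?_, ?_, hs1, ?_, ?_⟩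
  · exact ⟨g inst M s, (mem_runSet hM hs1 hs2 hs).2 ⟨s, le_rfl, hen1, rfl⟩⟩
  · intro i hi i' hi'
    rw [runSet_color hM hs1 hs2 hs hi, runSet_color hM hs1 hs2 hs hi']
  · -- closure
    intro i' hi' ⟨a, ha, hai⟩ ⟨b, hb, hib⟩ ⟨c0, hc0, hcol⟩
    rcases eq_or_lt_of_le hai with rfl | hai
    · exact ha
    rcases eq_or_lt_of_le hib with rfl | hib
    · exact hb
    have hi'S : i' ∈ Set.Icc 1 inst.n := by simpa [Set.mem_Icc, Finset.mem_Icc] using hi'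
    obtain ⟨ja, hja1, hja2, rfl⟩ := (mem_runSet hM hs1 hs2 hs).1 ha
    obtain ⟨jb, hjb1, hjb2, rfl⟩ := (mem_runSet hM hs1 hs2 hs).1 hb
    have hja := slot_mem hM hs1 hs2 hja1 hja2
    have hjb := slot_mem hM hs1 hs2 hjb1 hjb2
    have hca : inst.color (g inst M ja) = inst.color i' := by
      rw [runSet_color hM hs1 hs2 hs ha, ← runSet_color hM hs1 hs2 hs hc0, hcol]
    have h1 : M (g inst M ja) < M i' := hM.2.2 _ (g_mem hM hja) _ hi'S hai hca
    have h2 : M i' < M (g inst M jb) := hM.2.2 _ hi'S _ (g_mem hM hjb) hib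
      (by rw [hcol, runSet_color hM hs1 hs2 hs hc0, ← runSet_color hM hs1 hs2 hs hb])
    rw [g_right hM hja] at h1
    rw [g_right hM hjb] at h2
    show i' ∈ runSet k inst M s
    rw [mem_runSet hM hs1 hs2 hs]
    exact ⟨M i', by omega, by omega, g_left hM hi'S⟩
  · simp only [B, hcard]; omega
  · -- sorted condition
    intro t ht
    have hlen : ((B k inst M s).1.sort (· ≤ ·)).length = en k inst M s + 1 - s := by
      rw [Finset.length_sort, B, hcard]
    have ht' : t < en k inst M s + 1 - s := hlen ▸ ht
    set F := (B k inst M s).1 with hF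
    have hcard' : F.card = en k inst M s + 1 - s := hcard
    have hmono : StrictMono (fun u : Fin (en k inst M s + 1 - s) => g inst M (s + u)) := by
      intro u v huv
      exact g_mono_run hM hs1 hs2 hs (Nat.le_add_right _ _) (by omega)
        (Nat.le_add_right _ _) (by omega) (by omega)
    have hmem : ∀ u : Fin (en k inst M s + 1 - s), g inst M (s + u) ∈ F := by
      intro u
      exact (mem_runSet hM hs1 hs2 hs).2 ⟨s + u, Nat.le_add_right _ _, by omega, rfl⟩
    have hemb := Finset.orderEmbOfFin_unique hcard' hmem hmono
    have := congrFun hemb ⟨t, ht'⟩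
    simp only at this
    rw [Finset.orderEmbOfFin_apply] at this
    have hget : (F.sort (· ≤ ·)).get ⟨t, ht⟩ = g inst M (s + t) := by
      simp only [List.get_eq_getElem]
      exact this.symm
    rw [hget]
    have hmlt := hM.2.1 _ (g_mem hM (slot_mem hM hs1 hs2 (j := s + t) (Nat.le_add_right _ _) (by omega)))
    have := g_right hM (slot_mem hM hs1 hs2 (j := s + t) (Nat.le_add_right _ _) (by omega))
    simp only [B]
    omega

end BatchProps

theorem B_mem_batches (hM : IsSchedule k inst M) {s : ℕ} (hs1 : k+1 ≤ s)
    (hs2 : s ≤ k + inst.n) (hs : isStart k inst M s) :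
    B k inst M s ∈ batches k inst := by
  rw [batches, Finset.mem_filter, Finset.mem_product]
  exact ⟨⟨Finset.mem_powerset.2 (runSet_subset hM hs1 hs2 hs),
    Finset.mem_Icc.2 ⟨hs1, hs2⟩⟩, isBatch_B hM hs1 hs2 hs⟩

open Classical in
noncomputable def startsF (k : ℕ) (inst : RBMInstance) (M : ℕ → ℕ) : Finset ℕ :=
  (Finset.Icc (k+1) (k+inst.n)).filter (isStart k inst M)

open Classical in
noncomputable def xsol (k : ℕ) (inst : RBMInstance) (M : ℕ → ℕ) : Finset ℕ × ℕ → ℝ :=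
  fun b => if b ∈ (startsF k inst M).image (B k inst M) then 1 else 0

theorem xsol_nonneg (b : Finset ℕ × ℕ) : 0 ≤ xsol k inst M b := by
  rw [xsol]; split <;> norm_num

theorem xsol_zero_one (b : Finset ℕ × ℕ) : xsol k inst M b = 0 ∨ xsol k inst M b = 1 := by
  rw [xsol]; split
  · exact Or.inr rfl
  · exact Or.inl rfl

theorem mem_startsF {s : ℕ} :
    s ∈ startsF k inst M ↔ (k+1 ≤ s ∧ s ≤ k + inst.n ∧ isStart k inst M s) := by
  simp [startsF, Finset.mem_filter, Finset.mem_Icc, and_assoc]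

theorem xsol_eq_one {b : Finset ℕ × ℕ}
    (h : ∃ s ∈ startsF k inst M, B k inst M s = b) : xsol k inst M b = 1 := by
  rw [xsol, if_pos (Finset.mem_image.2 h)]

-- every slot j in range lies in the run of st j
theorem slot_in_own_run (hM : IsSchedule k inst M) {j : ℕ} (hj1 : k+1 ≤ j)
    (hj2 : j ≤ k + inst.n) :
    st k inst M j ≤ j ∧ j ≤ en k inst M (st k inst M j) := by
  have h := run_invariant (M := M) (inst := inst) hj1 hj2 (j' := st k inst M j)
    le_rfl (le_trans st_le le_en)
  exact ⟨st_le, h.2.symm ▸ le_en⟩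

theorem cover_aux (hM : IsSchedule k inst M) {i : ℕ} (hi : i ∈ Finset.Icc 1 inst.n) :
    ∃ s ∈ startsF k inst M, B k inst M s ∈ batches k inst ∧ i ∈ (B k inst M s).1 := by
  have hiS : i ∈ Set.Icc 1 inst.n := by simpa [Set.mem_Icc, Finset.mem_Icc] using hi
  have hMi : M i ∈ Set.Icc (k+1) (k+inst.n) := hM.1.mapsTo hiS
  rw [Set.mem_Icc] at hMi
  set j := M i with hj
  have hs1 : k + 1 ≤ st k inst M j := le_st hMi.1
  have hs2 : st k inst M j ≤ k + inst.n := le_trans st_le hMi.2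
  have hss : isStart k inst M (st k inst M j) := st_isStart hMi.1
  refine ⟨st k inst M j, mem_startsF.2 ⟨hs1, hs2, hss⟩, B_mem_batches hM hs1 hs2 hss, ?_⟩
  show i ∈ runSet k inst M (st k inst M j)
  rw [mem_runSet hM hs1 hs2 hss]
  have hrun := slot_in_own_run hM hMi.1 hMi.2
  exact ⟨j, hrun.1, hrun.2, g_left hM hiS⟩

theorem pack_aux (hM : IsSchedule k inst M) {j : ℕ}
    (hj : j ∈ Finset.Icc (k+1) (k+inst.n)) :
    ∑ b ∈ (batches k inst).filter (fun b => b.2 ≤ j ∧ j < b.2 + b.1.card),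
      xsol k inst M b ≤ 1 := by
  classical
  rw [Finset.mem_Icc] at hj
  have hpt : ∀ b ∈ (batches k inst).filter (fun b => b.2 ≤ j ∧ j < b.2 + b.1.card),
      xsol k inst M b ≤ (if b = B k inst M (st k inst M j) then (1:ℝ) else 0) := by
    intro b hb
    rw [Finset.mem_filter] at hb
    rw [xsol]
    split_ifs with h1 h2 h2
    · exact le_rfl
    · exfalso
      obtain ⟨s, hsF, rfl⟩ := Finset.mem_image.1 h1
      obtain ⟨hs1, hs2, hss⟩ := mem_startsF.1 hsF
      have hcard : (B k inst M s).1.card = en k inst M s + 1 - s :=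
        runSet_card hM hs1 hs2 hss
      have hble := hb.2.1
      have hblt := hb.2.2
      rw [hcard] at hblt
      have hen1 : s ≤ en k inst M s := le_en
      have hjle : j ≤ en k inst M s := by simp only [B] at hble hblt ⊢; omega
      have hjge : s ≤ j := by simpa [B] using hble
      have hsts : st k inst M s = s := st_start_self hs1 hss
      have := run_invariant (M := M) hs1 hs2 (j' := j) (by omega) hjle
      rw [hsts] at this
      exact h2 (by rw [this.1])
    · norm_num
    · exact le_rfl
  calc ∑ b ∈ (batches k inst).filter (fun b => b.2 ≤ j ∧ j < b.2 + b.1.card),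
        xsol k inst M b
      ≤ ∑ b ∈ (batches k inst).filter (fun b => b.2 ≤ j ∧ j < b.2 + b.1.card),
        (if b = B k inst M (st k inst M j) then (1:ℝ) else 0) := Finset.sum_le_sum hpt
    _ ≤ 1 := by
        rw [Finset.sum_ite_eq']
        split <;> norm_num

theorem value_eq (hM : IsSchedule k inst M) :
    ∑ b ∈ batches k inst, xsol k inst M b = ((startsF k inst M).card : ℝ) := by
  classical
  have hsub : (startsF k inst M).image (B k inst M) ⊆ batches k inst := by
    intro b hb
    obtain ⟨s, hsF, rfl⟩ := Finset.mem_image.1 hb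
    obtain ⟨hs1, hs2, hss⟩ := mem_startsF.1 hsF
    exact B_mem_batches hM hs1 hs2 hss
  have : ∑ b ∈ batches k inst, xsol k inst M b
      = ∑ b ∈ batches k inst ∩ (startsF k inst M).image (B k inst M), (1:ℝ) := by
    rw [← Finset.sum_ite_mem]
    apply Finset.sum_congr rfl
    intro b _
    rw [xsol]
  rw [this, Finset.inter_eq_right.2 hsub, Finset.sum_const, nsmul_eq_mul, mul_one,
    Finset.card_image_of_injOn]
  intro a _ b _ h
  exact (Prod.ext_iff.1 h).2

theorem P_iff (hM : IsSchedule k inst M) {j : ℕ} (h1 : k+1 ≤ j) (h2 : j + 1 ≤ k + inst.n) :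
    (∃ i ∈ Finset.Icc 1 inst.n, ∃ i' ∈ Finset.Icc 1 inst.n,
        M i = j ∧ M i' = j + 1 ∧ inst.color i ≠ inst.color i')
      ↔ sc inst M j ≠ sc inst M (j+1) := by
  have hjm : j ∈ Set.Icc (k+1) (k+inst.n) := by simp [Set.mem_Icc]; omega
  have hjm' : j + 1 ∈ Set.Icc (k+1) (k+inst.n) := by simp [Set.mem_Icc]; omega
  constructor
  · rintro ⟨i, hi, i', hi', rfl, e', hne⟩
    have hiS : i ∈ Set.Icc 1 inst.n := by simpa [Set.mem_Icc, Finset.mem_Icc] using hi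
    have hi'S : i' ∈ Set.Icc 1 inst.n := by simpa [Set.mem_Icc, Finset.mem_Icc] using hi'
    have e1 : g inst M (M i) = i := g_left hM hiS
    have e2 : g inst M (M i') = i' := g_left hM hi'S
    rw [sc, sc, e1, ← e', e2]
    exact hne
  · intro hne
    refine ⟨g inst M j, ?_, g inst M (j+1), ?_, g_right hM hjm, g_right hM hjm', hne⟩
    · simpa [Finset.mem_Icc, Set.mem_Icc] using g_mem hM hjm
    · simpa [Finset.mem_Icc, Set.mem_Icc] using g_mem hM hjm'

theorem startsF_card_eq (hM : IsSchedule k inst M) :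
    (startsF k inst M).card = scheduleCost k inst M := by
  classical
  rcases Nat.eq_zero_or_pos inst.n with hn | hn
  · rw [scheduleCost, if_pos hn]
    rw [Finset.card_eq_zero, startsF, Finset.filter_eq_empty_iff]
    intro s hs
    rw [Finset.mem_Icc, hn] at hs
    omega
  · rw [scheduleCost, if_neg (by omega)]
    set C := (Finset.Icc (k + 1) (k + inst.n - 1)).filter fun j =>
      ∃ i ∈ Finset.Icc 1 inst.n, ∃ i' ∈ Finset.Icc 1 inst.n,
        M i = j ∧ M i' = j + 1 ∧ inst.color i ≠ inst.color i' with hC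
    have hset : startsF k inst M = insert (k+1) (C.image (· + 1)) := by
      ext s
      simp only [mem_startsF, Finset.mem_insert, Finset.mem_image, hC,
        Finset.mem_filter]
      constructor
      · rintro ⟨h1, h2, hstart⟩
        rcases eq_or_ne s (k+1) with rfl | hne
        · exact Or.inl rfl
        rcases hstart with rfl | hstart
        · exact Or.inl rfl
        refine Or.inr ⟨s - 1, ⟨Finset.mem_Icc.2 ⟨by omega, by omega⟩, ?_⟩, by omega⟩
        apply (P_iff hM (by omega) (by omega : s - 1 + 1 ≤ k + inst.n)).2
        rw [show s - 1 + 1 = s by omega]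
        exact hstart.symm
      · rintro (rfl | ⟨jj, ⟨hjm, hP⟩, rfl⟩)
        · exact ⟨le_rfl, by omega, Or.inl rfl⟩
        rw [Finset.mem_Icc] at hjm
        obtain ⟨hj1, hj2⟩ := hjm
        refine ⟨by omega, by omega, Or.inr ?_⟩
        have h := (P_iff hM hj1 (by omega)).1 hP
        rw [show jj + 1 - 1 = jj by omega]
        exact h.symm
    have hnotmem : (k+1) ∉ C.image (· + 1) := by
      intro hmem
      obtain ⟨jj, hjj, he⟩ := Finset.mem_image.1 hmem
      simp only [hC, Finset.mem_filter, Finset.mem_Icc] at hjj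
      omega
    rw [hset, Finset.card_insert_of_notMem hnotmem,
      Finset.card_image_of_injective _ (add_left_injective 1)]
    omega

theorem main_construct (hM : IsSchedule k inst M) :
    LPFeasible k inst (xsol k inst M) ∧ (∀ b, xsol k inst M b = 0 ∨ xsol k inst M b = 1) ∧
    ∑ b ∈ batches k inst, xsol k inst M b = (scheduleCost k inst M : ℝ) := by
  refine ⟨⟨fun b => xsol_nonneg b, ?_, fun j hj => pack_aux hM hj⟩,
    fun b => xsol_zero_one b, ?_⟩
  · intro i hi
    obtain ⟨s, hsF, hBb, hib⟩ := cover_aux hM hi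
    have hmem : B k inst M s ∈ (batches k inst).filter (fun b => i ∈ b.1) :=
      Finset.mem_filter.2 ⟨hBb, hib⟩
    calc (1:ℝ) = xsol k inst M (B k inst M s) := (xsol_eq_one ⟨s, hsF, rfl⟩).symm
      _ ≤ _ := Finset.single_le_sum (fun b _ => xsol_nonneg b) hmem
  · rw [value_eq hM, startsF_card_eq hM]

theorem trivial_schedule (hk : 1 ≤ k) : IsSchedule k inst (fun i => i + k) := by
  refine ⟨⟨?_, ?_, ?_⟩, ?_, ?_⟩
  · intro i hi
    simp only [Set.mem_Icc] at hi
    show i + k ∈ Set.Icc (k+1) (k+inst.n)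
    simp only [Set.mem_Icc]; omega
  · intro a _ b _ h; simpa using h
  · intro j hj
    simp only [Set.mem_Icc] at hj
    exact ⟨j - k, by simp only [Set.mem_Icc]; omega, by show j - k + k = j; omega⟩
  · intro i hi
    simp only [Set.mem_Icc] at hi
    show i < i + k; omega
  · intro i _ i' _ h _
    show i + k < i' + k; omega

end LPRelax

/-- `LP_k` is a relaxation of RBM. Every feasible schedule `M` yields a
feasible 0/1-valued solution of `LP_k` of the same value; in particular the optimal value
of `LP_k` is at most `opt_k(I)`. -/
theorem lp_is_relaxation (k : ℕ) (hk : 1 ≤ k) (inst : RBMInstance) :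
    (∀ M : ℕ → ℕ, IsSchedule k inst M →
      ∃ x : Finset ℕ × ℕ → ℝ, LPFeasible k inst x ∧ (∀ b, x b = 0 ∨ x b = 1) ∧
        ∑ b ∈ batches k inst, x b = (scheduleCost k inst M : ℝ)) ∧
    sInf {v : ℝ | ∃ x : Finset ℕ × ℕ → ℝ,
        LPFeasible k inst x ∧ ∑ b ∈ batches k inst, x b = v} ≤ (optCost k inst : ℝ) := by

  have hpart1 : ∀ M : ℕ → ℕ, IsSchedule k inst M →
      ∃ x : Finset ℕ × ℕ → ℝ, LPFeasible k inst x ∧ (∀ b, x b = 0 ∨ x b = 1) ∧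
        ∑ b ∈ batches k inst, x b = (scheduleCost k inst M : ℝ) := by
    intro M hM
    exact ⟨LPRelax.xsol k inst M, LPRelax.main_construct hM⟩
  refine ⟨hpart1, ?_⟩
  have hne : {v : ℕ | ∃ M, IsSchedule k inst M ∧ scheduleCost k inst M = v}.Nonempty :=
    ⟨_, _, LPRelax.trivial_schedule hk, rfl⟩
  have hopt := Nat.sInf_mem hne
  obtain ⟨M0, hM0, hcost⟩ := hopt
  obtain ⟨x, hfeas, _, hval⟩ := hpart1 M0 hM0
  apply csInf_le
  · refine ⟨0, ?_⟩
    rintro v ⟨x', hx', rfl⟩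
    exact Finset.sum_nonneg (fun b _ => hx'.1 b)
  · have hcost' : scheduleCost k inst M0 = optCost k inst := hcost
    exact ⟨x, hfeas, by rw [hval, hcost']⟩
end

section
/- Every feasible dual solution lower-bounds the optimum: if (y, z) is a feasible solution of DP_k for an RBM instance I, then Σ_{i=1}^{n} y_i − Σ_{j=k+1}^{k+n} z_j ≤ opt_k(I). -/
open MeasureTheory

/-!
Cut the output sequence of an optimal schedule into maximal monochromatic runs; there are
exactly `opt_k(I)` of them. The items output during a run occupying the slots `[p, q)` form a
batch starting at `p`: within a color the schedule preserves the input order, so the `r`-th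
smallest of these items is the one output at slot `p + r`, and it arrived before that slot.
Hence each run contributes at most `1` to `Σ y - Σ z`.
-/

open Finset

section RunStarts

variable {α : Type*} [DecidableEq α] (c : ℕ → α)

def runStarts (a b : ℕ) : Finset ℕ :=
  (Ico a b).filter fun s => s = a ∨ c (s - 1) ≠ c s

theorem card_runStarts {a b : ℕ} (hab : a < b) :
    #(runStarts c a b) = #((Ico a (b - 1)).filter fun j => c j ≠ c (j + 1)) + 1 := by
  rw [runStarts, ← insert_Ico_add_one_left_eq_Ico hab, filter_insert, if_pos (Or.inl rfl),
    card_insert_of_notMem (by simp)]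
  congr 1
  refine card_nbij' (· - 1) (· + 1) ?_ ?_ ?_ ?_
  · intro s hs
    simp only [coe_filter, mem_Ico, Set.mem_ofPred_eq] at hs ⊢
    refine ⟨by omega, ?_⟩
    rw [Nat.sub_add_cancel (by omega)]
    exact hs.2.resolve_left (by omega)
  · intro j hj
    simp only [coe_filter, mem_Ico, Set.mem_ofPred_eq, Nat.add_sub_cancel] at hj ⊢
    exact ⟨by omega, Or.inr hj.2⟩
  · intro s hs
    simp only [coe_filter, mem_Ico, Set.mem_ofPred_eq] at hs
    show s - 1 + 1 = s
    omega
  · intro j _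
    simp

theorem sum_le_card_runStarts {R : Type*} [AddCommMonoidWithOne R] [PartialOrder R]
    [IsOrderedAddMonoid R] (w : ℕ → R) {a b : ℕ}
    (hw : ∀ p q, a ≤ p → p < q → q ≤ b → (∀ s ∈ Ico p q, c s = c p) →
      ∑ s ∈ Ico p q, w s ≤ 1) :
    ∑ s ∈ Ico a b, w s ≤ #(runStarts c a b) := by
  induction b using Nat.strong_induction_on with
  | _ b ih =>
  rcases le_or_gt b a with hba | hab
  · simp [runStarts, Ico_eq_empty_of_le hba]
  set IsStart : ℕ → Prop := fun s => s = a ∨ c (s - 1) ≠ c s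
  -- `p` is the start of the last run before `b`
  set p := Nat.findGreatest IsStart (b - 1)
  have hap : a ≤ p := Nat.le_findGreatest (by omega) (Or.inl rfl)
  have hpb : p < b := (Nat.findGreatest_le _).trans_lt (by omega)
  have hrun : ∀ s ∈ Ico p b, c s = c p := by
    intro s hs
    rw [mem_Ico] at hs
    induction s, hs.1 using Nat.le_induction with
    | base => rfl
    | succ s hps ihs =>
      have hnot : ¬ IsStart (s + 1) :=
        Nat.findGreatest_is_greatest (P := IsStart) (n := b - 1) (by omega) (by omega)
      simp only [IsStart, not_or, Nat.add_sub_cancel, not_not] at hnot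
      rw [← hnot.2, ihs ⟨hps, by omega⟩]
  have hcard : #(runStarts c a b) = #(runStarts c a p) + 1 := by
    rw [← card_insert_of_notMem (s := runStarts c a p) (a := p) (by simp [runStarts])]
    congr 1
    ext s
    simp only [runStarts, mem_insert, mem_filter, mem_Ico]
    constructor
    · rintro ⟨hs, hstart⟩
      have hsp : s ≤ p := Nat.le_findGreatest (P := IsStart) (show s ≤ b - 1 by omega) hstart
      by_cases hs_eq : s = p
      · exact Or.inl hs_eq
      · exact Or.inr ⟨⟨hs.1, by omega⟩, hstart⟩
    · rintro (rfl | ⟨hs, hstart⟩)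
      · exact ⟨⟨hap, hpb⟩, Nat.findGreatest_spec (P := IsStart) (m := a) (by omega) (Or.inl rfl)⟩
      · exact ⟨⟨hs.1, by omega⟩, hstart⟩
  calc ∑ s ∈ Ico a b, w s = ∑ s ∈ Ico a p, w s + ∑ s ∈ Ico p b, w s :=
        (sum_Ico_consecutive w hap hpb.le).symm
    _ ≤ #(runStarts c a p) + 1 :=
        add_le_add (ih p hpb fun p' q hp' hpq hq => hw p' q hp' hpq (by omega))
          (hw p b hap hpb le_rfl hrun)
    _ = #(runStarts c a b) := by rw [hcard, Nat.cast_succ]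

end RunStarts

noncomputable def itemAt (inst : RBMInstance) (M : ℕ → ℕ) : ℕ → ℕ :=
  Function.invFunOn M (Set.Icc 1 inst.n)

namespace IsSchedule

variable {k : ℕ} {inst : RBMInstance} {M : ℕ → ℕ} (hM : IsSchedule k inst M)
include hM

theorem apply_mem {i : ℕ} (hi : i ∈ Icc 1 inst.n) : M i ∈ Icc (k + 1) (k + inst.n) := by
  simpa using hM.1.mapsTo (by simpa using hi)

theorem itemAt_mem {j : ℕ} (hj : j ∈ Icc (k + 1) (k + inst.n)) :
    itemAt inst M j ∈ Icc 1 inst.n := by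
  simpa [itemAt] using hM.1.surjOn.mapsTo_invFunOn (by simpa using hj)

theorem apply_itemAt {j : ℕ} (hj : j ∈ Icc (k + 1) (k + inst.n)) : M (itemAt inst M j) = j :=
  hM.1.invOn_invFunOn.2 (by simpa using hj)

theorem itemAt_apply {i : ℕ} (hi : i ∈ Icc 1 inst.n) : itemAt inst M (M i) = i :=
  hM.1.invOn_invFunOn.1 (by simpa using hi)

theorem itemAt_lt {j : ℕ} (hj : j ∈ Icc (k + 1) (k + inst.n)) : itemAt inst M j < j := by
  have h := hM.2.1 _ (by simpa using hM.itemAt_mem hj)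
  rwa [hM.apply_itemAt hj] at h

theorem apply_le_apply {i i' : ℕ} (hi : i ∈ Icc 1 inst.n) (hi' : i' ∈ Icc 1 inst.n) (hle : i ≤ i')
    (hc : inst.color i = inst.color i') : M i ≤ M i' := by
  rcases hle.eq_or_lt with rfl | hlt
  · rfl
  · exact (hM.2.2 i (by simpa using hi) i' (by simpa using hi') hlt hc).le

theorem sum_itemAt {β : Type*} [AddCommMonoid β] (f : ℕ → β) :
    ∑ i ∈ Icc 1 inst.n, f i = ∑ j ∈ Icc (k + 1) (k + inst.n), f (itemAt inst M j) :=
  sum_nbij' M (itemAt inst M) (fun _ => hM.apply_mem) (fun _ => hM.itemAt_mem)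
    (fun _ => hM.itemAt_apply) (fun _ => hM.apply_itemAt) (fun _ hi => by rw [hM.itemAt_apply hi])

section Monochrome

variable {p q : ℕ} (hp : k + 1 ≤ p) (hq : q ≤ k + inst.n + 1)
  (hc : ∀ s ∈ Ico p q, inst.color (itemAt inst M s) = inst.color (itemAt inst M p))
include hp hq hc

theorem strictMonoOn_itemAt : StrictMonoOn (itemAt inst M) (Set.Ico p q) := by
  intro s hs s' hs' hlt
  simp only [Set.mem_Ico] at hs hs'
  have hslot : ∀ t, p ≤ t → t < q → t ∈ Icc (k + 1) (k + inst.n) := by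
    intro t h1 h2; simp only [mem_Icc]; omega
  by_contra! hle
  have h := hM.apply_le_apply (hM.itemAt_mem (hslot s' hs'.1 hs'.2))
    (hM.itemAt_mem (hslot s hs.1 hs.2)) hle
    ((hc s' (mem_Ico.2 hs')).trans (hc s (mem_Ico.2 hs)).symm)
  rw [hM.apply_itemAt (hslot s' hs'.1 hs'.2), hM.apply_itemAt (hslot s hs.1 hs.2)] at h
  omega

theorem mem_batches (hpq : p < q) : ((Ico p q).image (itemAt inst M), p) ∈ batches k inst := by
  classical
  set I := (Ico p q).image (itemAt inst M)
  have hslot : ∀ s ∈ Ico p q, s ∈ Icc (k + 1) (k + inst.n) := by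
    intro s hs; simp only [mem_Ico, mem_Icc] at hs ⊢; omega
  have hmono := hM.strictMonoOn_itemAt hp hq hc
  have hcard : #I = q - p := by
    rw [card_image_of_injOn (by simpa using hmono.injOn), Nat.card_Ico]
  have hsub : I ⊆ Icc 1 inst.n := by
    simp only [I, subset_iff, mem_image]
    rintro _ ⟨s, hs, rfl⟩
    exact hM.itemAt_mem (hslot s hs)
  have hcolor : ∀ i ∈ I, inst.color i = inst.color (itemAt inst M p) := by
    simp only [I, mem_image]
    rintro _ ⟨s, hs, rfl⟩
    exact hc s hs
  have hslotI : ∀ i ∈ I, M i ∈ Ico p q := by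
    simp only [I, mem_image]
    rintro _ ⟨s, hs, rfl⟩
    rwa [hM.apply_itemAt (hslot s hs)]
  rw [batches, mem_filter, mem_product, mem_powerset]
  refine ⟨⟨hsub, mem_Icc.2 ⟨hp, by omega⟩⟩, ⟨_, mem_image_of_mem _ (mem_Ico.2 ⟨le_rfl, hpq⟩)⟩,
    hsub, fun i hi i' hi' => (hcolor i hi).trans (hcolor i' hi').symm, ?_, hp,
    show p + #I - 1 ≤ _ by omega, ?_⟩
  · rintro i hi ⟨a, ha, hai⟩ ⟨a', ha', hia'⟩ ⟨b, hb, hib⟩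
    have hcol := hib.trans (hcolor b hb)
    have h1 := hM.apply_le_apply (hsub ha) hi hai ((hcolor a ha).trans hcol.symm)
    have h2 := hM.apply_le_apply hi (hsub ha') hia' (hcol.trans (hcolor a' ha').symm)
    have h3 := hslotI a ha
    have h4 := hslotI a' ha'
    rw [← hM.itemAt_apply hi]
    exact mem_image_of_mem _ (by simp only [mem_Ico] at h3 h4 ⊢; omega)
  · -- the `r`-th smallest element of `I` is the item output at slot `p + r`
    intro r hr
    have hrq : r < q - p := by simpa [hcard] using hr
    have hf := orderEmbOfFin_unique hcard (f := fun t => itemAt inst M (p + t))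
      (fun t => mem_image_of_mem _ (mem_Ico.2 ⟨by omega, by omega⟩))
      (fun t t' h => hmono (by simp; omega) (by simp; omega) (by simpa using h))
    have hget : (I.sort (· ≤ ·)).get ⟨r, hr⟩ = itemAt inst M (p + r) := by
      simpa [← hf] using (orderEmbOfFin_apply I hcard ⟨r, hrq⟩).symm
    rw [hget]
    exact hM.itemAt_lt (hslot _ (mem_Ico.2 ⟨by omega, by omega⟩))

theorem sum_itemAt_sub_le_one {y z : ℕ → ℝ} (hyz : DPFeasible k inst y z) (hpq : p < q) :
    ∑ s ∈ Ico p q, (y (itemAt inst M s) - z s) ≤ 1 := by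
  have hinj : Set.InjOn (itemAt inst M) (Ico p q : Set ℕ) := by
    simpa using (hM.strictMonoOn_itemAt hp hq hc).injOn
  have h := hyz.2.2 _ (hM.mem_batches hp hq hc hpq)
  rwa [sum_image hinj, card_image_of_injOn hinj, Nat.card_Ico, Nat.add_sub_of_le hpq.le,
    ← sum_sub_distrib] at h

end Monochrome

theorem scheduleCost_eq_card_runStarts :
    scheduleCost k inst M =
      #(runStarts (inst.color ∘ itemAt inst M) (k + 1) (k + inst.n + 1)) := by
  rcases Nat.eq_zero_or_pos inst.n with hn | hn
  · simp [scheduleCost, runStarts, hn]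
  rw [card_runStarts _ (by omega), scheduleCost, if_neg hn.ne', add_comm,
    show k + inst.n + 1 - 1 = k + inst.n - 1 + 1 by omega, Ico_add_one_right_eq_Icc]
  congr 2
  ext j
  simp only [mem_filter, Function.comp_apply]
  refine and_congr_right fun hj => ?_
  have hj0 : j ∈ Icc (k + 1) (k + inst.n) := by simp only [mem_Icc] at hj ⊢; omega
  have hj1 : j + 1 ∈ Icc (k + 1) (k + inst.n) := by simp only [mem_Icc] at hj ⊢; omega
  constructor
  · rintro ⟨i, hi, i', hi', rfl, hi'j, hne⟩
    simpa [← hi'j, hM.itemAt_apply hi, hM.itemAt_apply hi'] using hne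
  · intro hne
    exact ⟨_, hM.itemAt_mem hj0, _, hM.itemAt_mem hj1, hM.apply_itemAt hj0,
      hM.apply_itemAt hj1, hne⟩

end IsSchedule

theorem isSchedule_add_right {k : ℕ} (hk : 1 ≤ k) (inst : RBMInstance) :
    IsSchedule k inst (· + k) := by
  refine ⟨⟨fun i hi => ?_, fun i _ i' _ h => add_right_cancel h, fun j hj => ⟨j - k, ?_, ?_⟩⟩,
    fun i _ => Nat.lt_add_of_pos_right hk, fun i _ i' _ h _ => Nat.add_lt_add_right h k⟩ <;>
  simp only [Set.mem_Icc] at * <;> omega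

theorem exists_isSchedule_scheduleCost_eq_optCost {k : ℕ} (hk : 1 ≤ k) (inst : RBMInstance) :
    ∃ M, IsSchedule k inst M ∧ scheduleCost k inst M = optCost k inst :=
  Nat.sInf_mem (s := {v | ∃ M, IsSchedule k inst M ∧ scheduleCost k inst M = v})
    ⟨_, _, isSchedule_add_right hk inst, rfl⟩

/-- Every feasible dual solution lower-bounds the optimum: if `(y, z)`
is feasible for `DP_k`, then `Σ_i y_i − Σ_{j=k+1}^{k+n} z_j ≤ opt_k(I)`. -/
theorem dual_lower_bounds_opt (k : ℕ) (hk : 1 ≤ k) (inst : RBMInstance)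
    (y z : ℕ → ℝ) (hyz : DPFeasible k inst y z) :
    ∑ i ∈ Finset.Icc 1 inst.n, y i - ∑ j ∈ Finset.Icc (k + 1) (k + inst.n), z j ≤
      (optCost k inst : ℝ) := by
  obtain ⟨M, hM, hcost⟩ := exists_isSchedule_scheduleCost_eq_optCost hk inst
  calc ∑ i ∈ Icc 1 inst.n, y i - ∑ j ∈ Icc (k + 1) (k + inst.n), z j
      = ∑ s ∈ Ico (k + 1) (k + inst.n + 1), (y (itemAt inst M s) - z s) := by
        rw [hM.sum_itemAt, ← sum_sub_distrib, Ico_add_one_right_eq_Icc]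
    _ ≤ #(runStarts (inst.color ∘ itemAt inst M) (k + 1) (k + inst.n + 1)) :=
        sum_le_card_runStarts _ _ fun p q hp hpq hq hc => hM.sum_itemAt_sub_le_one hp hq hc hyz hpq
    _ = optCost k inst := by rw [← hcost, hM.scheduleCost_eq_card_runStarts]
end

section
/- Let 0 < α ≤ β be real numbers, m ≥ 0 an integer, and ℓ_1, …, ℓ_m real numbers with α ≤ ℓ_p ≤ β for every p. Then Σ_{p=1}^{m} (1/2 − ℓ_p · Σ_{r=p+1}^{m} 1/ℓ_r) ≤ (1/2)·(log₂(β/α) + 1). -/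
/-- Chain lemma: if `f` at least doubles between elements of `P` and is `≥ α` on `P`,
then `f` at the max of `P` is at least `α * 2 ^ (|P| - 1)`. -/
lemma chain_growth (f : ℕ → ℝ) (α : ℝ) :
    ∀ (n : ℕ) (P : Finset ℕ) (hne : P.Nonempty), P.card = n →
      (∀ p ∈ P, α ≤ f p) →
      (∀ p ∈ P, ∀ q ∈ P, p < q → 2 * f p ≤ f q) →
      α * 2 ^ (n - 1) ≤ f (P.max' hne) := by
  intro n
  induction n with
  | zero =>
    intro P hne hcard
    rw [Finset.card_eq_zero] at hcard
    simp [hcard] at hne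
  | succ n ih =>
    intro P hne hcard hlb hch
    rcases Nat.eq_zero_or_pos n with h0 | hpos
    · subst h0
      simpa using hlb _ (P.max'_mem hne)
    · obtain ⟨k, rfl⟩ : ∃ k, n = k + 1 := ⟨n - 1, (Nat.succ_pred_eq_of_pos hpos).symm⟩
      set M := P.max' hne with hM
      have hMmem : M ∈ P := P.max'_mem hne
      set P' := P.erase M with hP'
      have hcard' : P'.card = k + 1 := by
        simp [hP', Finset.card_erase_of_mem hMmem, hcard]
      have hne' : P'.Nonempty := by
        rw [← Finset.card_pos, hcard']; omega
      have hmem' : P'.max' hne' ∈ P := Finset.mem_of_mem_erase (P'.max'_mem hne')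
      have hlt : P'.max' hne' < M := by
        have h1 : P'.max' hne' ≤ M := Finset.le_max' P _ hmem'
        have h2 : P'.max' hne' ≠ M := Finset.ne_of_mem_erase (P'.max'_mem hne')
        exact lt_of_le_of_ne h1 h2
      have h1 : α * 2 ^ (k + 1 - 1) ≤ f (P'.max' hne') :=
        ih P' hne' hcard' (fun p hp => hlb p (Finset.mem_of_mem_erase hp))
          (fun p hp q hq hpq =>
            hch p (Finset.mem_of_mem_erase hp) q (Finset.mem_of_mem_erase hq) hpq)
      have h2 : 2 * f (P'.max' hne') ≤ f M := hch _ hmem' _ hMmem hlt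
      have hpow : (2 : ℝ) ^ (k + 1 + 1 - 1) = 2 * 2 ^ (k + 1 - 1) := by
        simp [pow_succ]; ring
      calc α * 2 ^ (k + 1 + 1 - 1) = 2 * (α * 2 ^ (k + 1 - 1)) := by rw [hpow]; ring
        _ ≤ 2 * f (P'.max' hne') := by linarith
        _ ≤ f M := h2

/-- For `0 < α ≤ β` and `ℓ_1, …, ℓ_m ∈ [α, β]`,
`Σ_{p=1}^{m} (1/2 − ℓ_p · Σ_{r=p+1}^{m} 1/ℓ_r) ≤ (1/2)·(log₂(β/α) + 1)`. -/
theorem first_part_bound (α β : ℝ) (hα : 0 < α) (hαβ : α ≤ β)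
    (m : ℕ) (ℓ : ℕ → ℝ)
    (hmem : ∀ p, 1 ≤ p → p ≤ m → α ≤ ℓ p ∧ ℓ p ≤ β) :
    ∑ p ∈ Finset.Icc 1 m, (1 / 2 - ℓ p * ∑ r ∈ Finset.Icc (p + 1) m, 1 / ℓ r) ≤
      (1 / 2) * (Real.logb 2 (β / α) + 1) := by
  classical
  set S : ℕ → ℝ := fun p => ∑ r ∈ Finset.Icc (p + 1) m, 1 / ℓ r with hS
  have hℓpos : ∀ p ∈ Finset.Icc 1 m, 0 < ℓ p := by
    intro p hp
    rw [Finset.mem_Icc] at hp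
    exact lt_of_lt_of_le hα (hmem p hp.1 hp.2).1
  have hSnonneg : ∀ p ∈ Finset.Icc 1 m, 0 ≤ S p := by
    intro p hp
    rw [Finset.mem_Icc] at hp
    apply Finset.sum_nonneg
    intro r hr
    rw [Finset.mem_Icc] at hr
    have : 0 < ℓ r := lt_of_lt_of_le hα (hmem r (by omega) hr.2).1
    positivity
  set P : Finset ℕ := (Finset.Icc 1 m).filter (fun p => ℓ p * S p < 1 / 2) with hP
  have hPsub : P ⊆ Finset.Icc 1 m := Finset.filter_subset _ _
  -- chain property on P
  have hch : ∀ p ∈ P, ∀ q ∈ P, p < q → 2 * ℓ p ≤ ℓ q := by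
    intro p hp q hq hpq
    rw [hP, Finset.mem_filter] at hp hq
    have hpI := hp.1; have hqI := hq.1
    rw [Finset.mem_Icc] at hpI hqI
    have hℓp : 0 < ℓ p := lt_of_lt_of_le hα (hmem p hpI.1 hpI.2).1
    have hℓq : 0 < ℓ q := lt_of_lt_of_le hα (hmem q hqI.1 hqI.2).1
    have hq_in : q ∈ Finset.Icc (p + 1) m := Finset.mem_Icc.mpr ⟨hpq, hqI.2⟩
    have hsingle : 1 / ℓ q ≤ S p := by
      apply Finset.single_le_sum (f := fun r => 1 / ℓ r) _ hq_in
      intro r hr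
      rw [Finset.mem_Icc] at hr
      have : 0 < ℓ r := lt_of_lt_of_le hα (hmem r (by omega) hr.2).1
      positivity
    have h1 : ℓ p * (1 / ℓ q) ≤ ℓ p * S p := by
      apply mul_le_mul_of_nonneg_left hsingle hℓp.le
    have h2 : ℓ p * (1 / ℓ q) < 1 / 2 := lt_of_le_of_lt h1 hp.2
    rw [mul_one_div, div_lt_div_iff₀ hℓq (by norm_num : (0:ℝ) < 2)] at h2
    linarith
  -- bound the sum by (1/2) * card P
  have hsum_le : ∑ p ∈ Finset.Icc 1 m, (1 / 2 - ℓ p * S p) ≤ (P.card : ℝ) * (1 / 2) := by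
    calc ∑ p ∈ Finset.Icc 1 m, (1 / 2 - ℓ p * S p)
        ≤ ∑ p ∈ P, (1 / 2 - ℓ p * S p) := by
          rw [← Finset.sum_filter_add_sum_filter_not (Finset.Icc 1 m)
            (fun p => ℓ p * S p < 1 / 2)]
          have : ∑ p ∈ (Finset.Icc 1 m).filter (fun p => ¬ ℓ p * S p < 1 / 2),
              (1 / 2 - ℓ p * S p) ≤ 0 := by
            apply Finset.sum_nonpos
            intro p hp
            rw [Finset.mem_filter] at hp
            push_neg at hp
            linarith [hp.2]
          rw [hP]; linarith
      _ ≤ ∑ p ∈ P, (1 / 2 : ℝ) := by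
          apply Finset.sum_le_sum
          intro p hp
          have h1 : 0 ≤ ℓ p * S p :=
            mul_nonneg (hℓpos p (hPsub hp)).le (hSnonneg p (hPsub hp))
          linarith
      _ = (P.card : ℝ) * (1 / 2) := by rw [Finset.sum_const]; simp [mul_comm]
  -- bound card P
  have hlogb_nonneg : 0 ≤ Real.logb 2 (β / α) :=
    Real.logb_nonneg (by norm_num) ((one_le_div hα).mpr hαβ)
  have hcard : (P.card : ℝ) ≤ Real.logb 2 (β / α) + 1 := by
    rcases P.eq_empty_or_nonempty with hPe | hPne
    · rw [hPe]; simp; linarith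
    · have hgrow := chain_growth ℓ α P.card P hPne rfl
        (fun p hp => by
          have := hPsub hp; rw [Finset.mem_Icc] at this
          exact (hmem p this.1 this.2).1) hch
      have hMub : ℓ (P.max' hPne) ≤ β := by
        have := hPsub (P.max'_mem hPne); rw [Finset.mem_Icc] at this
        exact (hmem _ this.1 this.2).2
      have hk : α * 2 ^ (P.card - 1) ≤ β := le_trans hgrow hMub
      have hp2 : (2 : ℝ) ^ (P.card - 1) ≤ β / α := by
        rw [le_div_iff₀ hα]; linarith [hk]
      have hlog : ((P.card - 1 : ℕ) : ℝ) ≤ Real.logb 2 (β / α) := by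
        have h1 : Real.logb 2 ((2 : ℝ) ^ (P.card - 1)) ≤ Real.logb 2 (β / α) :=
          Real.logb_le_logb_of_le (by norm_num) (by positivity) hp2
        rwa [Real.logb_pow, Real.logb_self_eq_one (by norm_num), mul_one] at h1
      have hcpos : 1 ≤ P.card := Finset.Nonempty.card_pos hPne
      have : ((P.card - 1 : ℕ) : ℝ) = (P.card : ℝ) - 1 := by
        rw [Nat.cast_sub hcpos]; norm_num
      linarith [hlog, this.symm.le]
  calc ∑ p ∈ Finset.Icc 1 m, (1 / 2 - ℓ p * S p)
      ≤ (P.card : ℝ) * (1 / 2) := hsum_le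
    _ ≤ (Real.logb 2 (β / α) + 1) * (1 / 2) := by
        apply mul_le_mul_of_nonneg_right hcard; norm_num
    _ = (1 / 2) * (Real.logb 2 (β / α) + 1) := by ring
end

section
/- Let 0 < α ≤ β be real numbers, m ≥ 0 an integer, and ℓ_1, …, ℓ_m real numbers with α ≤ ℓ_p ≤ β for every p. Then Σ_{p=1}^{m} (1/2 − (Σ_{r=p+1}^{m} ℓ_r)/ℓ_p) ≤ (1/2)·(log₂(β/α) + 1). -/
/-- Chain lemma: if `ℓ ≥ α` on `S` and `ℓ` doubles when going to smaller elements of `S`,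
then `ℓ p ≥ α * 2 ^ (number of elements of S above p)`. -/
lemma chain_pow (ℓ : ℕ → ℝ) (α : ℝ) (S : Finset ℕ)
    (hlb : ∀ p ∈ S, α ≤ ℓ p)
    (hchain : ∀ p ∈ S, ∀ q ∈ S, p < q → 2 * ℓ q ≤ ℓ p) :
    ∀ n : ℕ, ∀ p ∈ S, (S.filter (fun x => p < x)).card = n → α * 2 ^ n ≤ ℓ p := by
  intro n
  induction n with
  | zero => intro p hp _; simpa using hlb p hp
  | succ n ih =>
    intro p hp hcard
    have hne : (S.filter (fun x => p < x)).Nonempty := by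
      rw [← Finset.card_pos, hcard]; omega
    set q := (S.filter (fun x => p < x)).min' hne with hq
    have hqmem : q ∈ S.filter (fun x => p < x) := Finset.min'_mem _ hne
    have hqS : q ∈ S := (Finset.mem_filter.1 hqmem).1
    have hpq : p < q := (Finset.mem_filter.1 hqmem).2
    have hset : S.filter (fun x => p < x) = insert q (S.filter (fun x => q < x)) := by
      ext x
      simp only [Finset.mem_filter, Finset.mem_insert]
      constructor
      · rintro ⟨hxS, hpx⟩
        rcases (Finset.min'_le _ x (Finset.mem_filter.2 ⟨hxS, hpx⟩)).eq_or_lt with h | h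
        · exact Or.inl h.symm
        · exact Or.inr ⟨hxS, h⟩
      · rintro (rfl | ⟨hxS, hqx⟩)
        · exact ⟨hqS, hpq⟩
        · exact ⟨hxS, hpq.trans hqx⟩
    have hq_not : q ∉ S.filter (fun x => q < x) := by simp
    have hc2 : (S.filter (fun x => q < x)).card = n := by
      have hins := Finset.card_insert_of_notMem hq_not
      rw [← hset, hcard] at hins; omega
    have hih := ih q hqS hc2
    have hch := hchain p hp q hqS hpq
    calc α * 2 ^ (n + 1) = 2 * (α * 2 ^ n) := by ring
    _ ≤ 2 * ℓ q := by linarith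
    _ ≤ ℓ p := hch

/-- For `0 < α ≤ β` and `ℓ_1, …, ℓ_m ∈ [α, β]`,
`Σ_{p=1}^{m} (1/2 − (Σ_{r=p+1}^{m} ℓ_r)/ℓ_p) ≤ (1/2)·(log₂(β/α) + 1)`. -/
theorem second_part_bound (α β : ℝ) (hα : 0 < α) (hαβ : α ≤ β)
    (m : ℕ) (ℓ : ℕ → ℝ)
    (hmem : ∀ p, 1 ≤ p → p ≤ m → α ≤ ℓ p ∧ ℓ p ≤ β) :
    ∑ p ∈ Finset.Icc 1 m, (1 / 2 - (∑ r ∈ Finset.Icc (p + 1) m, ℓ r) / ℓ p) ≤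
      (1 / 2) * (Real.logb 2 (β / α) + 1) := by
  set T : ℕ → ℝ := fun p => ∑ r ∈ Finset.Icc (p + 1) m, ℓ r with hT
  have hℓpos : ∀ p, 1 ≤ p → p ≤ m → 0 < ℓ p := fun p h1 h2 =>
    lt_of_lt_of_le hα (hmem p h1 h2).1
  have hTnonneg : ∀ p : ℕ, 0 ≤ T p := by
    intro p
    apply Finset.sum_nonneg
    intro r hr
    rw [Finset.mem_Icc] at hr
    exact le_of_lt (hℓpos r (by omega) hr.2)
  set S : Finset ℕ := (Finset.Icc 1 m).filter (fun p => 2 * T p < ℓ p) with hS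
  have hlogb_nonneg : 0 ≤ Real.logb 2 (β / α) :=
    Real.logb_nonneg one_lt_two ((one_le_div hα).2 hαβ)
  -- Step 1: bound the sum by |S| / 2
  have step1 : ∑ p ∈ Finset.Icc 1 m, (1 / 2 - T p / ℓ p) ≤ (S.card : ℝ) * (1 / 2) := by
    have h1 : ∑ p ∈ Finset.Icc 1 m, (1 / 2 - T p / ℓ p) ≤
        ∑ p ∈ Finset.Icc 1 m, (if 2 * T p < ℓ p then (1 / 2 : ℝ) else 0) := by
      apply Finset.sum_le_sum
      intro p hp
      rw [Finset.mem_Icc] at hp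
      have hℓp := hℓpos p hp.1 hp.2
      by_cases hgood : 2 * T p < ℓ p
      · rw [if_pos hgood]
        have : 0 ≤ T p / ℓ p := div_nonneg (hTnonneg p) hℓp.le
        linarith
      · rw [if_neg hgood]
        push_neg at hgood
        have hhalf : (1 : ℝ) / 2 ≤ T p / ℓ p := by
          rw [le_div_iff₀ hℓp]
          linarith
        linarith
    have h2 : ∑ p ∈ Finset.Icc 1 m, (if 2 * T p < ℓ p then (1 / 2 : ℝ) else 0) =
        (S.card : ℝ) * (1 / 2) := by
      rw [← Finset.sum_filter, ← hS, Finset.sum_const, nsmul_eq_mul]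
    linarith
  -- Step 2: chain property on S
  have hchain : ∀ p ∈ S, ∀ q ∈ S, p < q → 2 * ℓ q ≤ ℓ p := by
    intro p hp q hq hpq
    rw [hS, Finset.mem_filter, Finset.mem_Icc] at hp hq
    have hqIcc : q ∈ Finset.Icc (p + 1) m := Finset.mem_Icc.2 ⟨hpq, hq.1.2⟩
    have hsingle : ℓ q ≤ T p := by
      apply Finset.single_le_sum (f := ℓ) _ hqIcc
      intro r hr
      rw [Finset.mem_Icc] at hr
      exact le_of_lt (hℓpos r (by omega) hr.2)
    linarith [hp.2]
  have hlb : ∀ p ∈ S, α ≤ ℓ p := by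
    intro p hp
    rw [hS, Finset.mem_filter, Finset.mem_Icc] at hp
    exact (hmem p hp.1.1 hp.1.2).1
  -- Step 3: |S| ≤ logb 2 (β/α) + 1
  have step3 : (S.card : ℝ) ≤ Real.logb 2 (β / α) + 1 := by
    rcases S.eq_empty_or_nonempty with hemp | hne
    · rw [hemp]; simp; linarith
    · set p₀ := S.min' hne with hp₀
      have hp₀S : p₀ ∈ S := S.min'_mem hne
      have hfilter : S.filter (fun x => p₀ < x) = S.erase p₀ := by
        ext x
        simp only [Finset.mem_filter, Finset.mem_erase]
        constructor
        · rintro ⟨hx, hlt⟩; exact ⟨hlt.ne', hx⟩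
        · rintro ⟨hne', hx⟩
          exact ⟨hx, lt_of_le_of_ne (S.min'_le x hx) (Ne.symm hne')⟩
      have hcard : (S.filter (fun x => p₀ < x)).card = S.card - 1 := by
        rw [hfilter, Finset.card_erase_of_mem hp₀S]
      have hkey : α * 2 ^ (S.card - 1) ≤ ℓ p₀ :=
        chain_pow ℓ α S hlb hchain (S.card - 1) p₀ hp₀S hcard
      have hub : ℓ p₀ ≤ β := by
        have := hp₀S
        rw [hS, Finset.mem_filter, Finset.mem_Icc] at this
        exact (hmem p₀ this.1.1 this.1.2).2
      have hpow : (2 : ℝ) ^ (S.card - 1) ≤ β / α := by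
        rw [le_div_iff₀ hα]
        nlinarith
      have hlog : ((S.card - 1 : ℕ) : ℝ) ≤ Real.logb 2 (β / α) := by
        have h2 : Real.logb 2 ((2 : ℝ) ^ (S.card - 1)) = ((S.card - 1 : ℕ) : ℝ) := by
          rw [Real.logb_pow]
          simp [Real.logb_self_eq_one]
        rw [← h2]
        exact Real.logb_le_logb_of_le one_lt_two (by positivity) hpow
      have hScard : 1 ≤ S.card := Finset.card_pos.2 hne
      have : ((S.card : ℕ) : ℝ) = ((S.card - 1 : ℕ) : ℝ) + 1 := by
        push_cast [Nat.cast_sub hScard]; ring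
      rw [this]
      linarith
  calc ∑ p ∈ Finset.Icc 1 m, (1 / 2 - T p / ℓ p) ≤ (S.card : ℝ) * (1 / 2) := step1
  _ ≤ (Real.logb 2 (β / α) + 1) * (1 / 2) := by
      apply mul_le_mul_of_nonneg_right step3; norm_num
  _ = (1 / 2) * (Real.logb 2 (β / α) + 1) := by ring
end

section
/- Let k' ≥ 1 and m ≥ 1 be integers and let n : {1, …, m} → ℕ satisfy n(c) ≥ 1 for every c and Σ_{c=1}^{m} n(c) = k'. Then there exists c ∈ {1, …, m} with c · n(c) ≥ k' / (1 + ln k'). -/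
/-- If a buffer holds `k' ≥ 1` items of colors `1, …, m` with
`n(c) ≥ 1` items of each color `c` and `Σ_{c=1}^{m} n(c) = k'`, then some color `c`
has potential `c · n(c) ≥ k' / (1 + ln k')`. -/
theorem max_potential_bound (k' m : ℕ) (hk' : 1 ≤ k') (hm : 1 ≤ m) (n : ℕ → ℕ)
    (hn : ∀ c, 1 ≤ c → c ≤ m → 1 ≤ n c)
    (hsum : ∑ c ∈ Finset.Icc 1 m, n c = k') :
    ∃ c, 1 ≤ c ∧ c ≤ m ∧
      (k' : ℝ) / (1 + Real.log (k' : ℝ)) ≤ (c : ℝ) * (n c : ℝ) := by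
  by_contra h
  push_neg at h
  set s : ℝ := (k' : ℝ) / (1 + Real.log (k' : ℝ)) with hs
  have hlog0 : (0:ℝ) ≤ Real.log k' := Real.log_nonneg (by exact_mod_cast hk')
  have hden : (0:ℝ) < 1 + Real.log k' := by linarith
  have hspos : 0 < s := div_pos (by exact_mod_cast hk') hden
  -- m ≤ k'
  have hmk : m ≤ k' := by
    calc m = ∑ c ∈ Finset.Icc 1 m, 1 := by simp
    _ ≤ ∑ c ∈ Finset.Icc 1 m, n c := by
        apply Finset.sum_le_sum
        intro c hc
        rw [Finset.mem_Icc] at hc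
        exact hn c hc.1 hc.2
    _ = k' := hsum
  -- harmonic bound
  have hharm : (harmonic m : ℝ) ≤ 1 + Real.log m := harmonic_le_one_add_log m
  have hlogm : Real.log m ≤ Real.log k' := by
    apply Real.log_le_log (by exact_mod_cast hm)
    exact_mod_cast hmk
  -- key strict inequality
  have key : (k' : ℝ) < s * (harmonic m : ℝ) := by
    have hsum' : (k' : ℝ) = ∑ c ∈ Finset.Icc 1 m, (n c : ℝ) := by
      rw [← hsum]; push_cast; ring
    have hH : (harmonic m : ℝ) = ∑ c ∈ Finset.Icc 1 m, (1 / (c:ℝ)) := by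
      rw [harmonic_eq_sum_Icc]; push_cast; simp [one_div]
    rw [hsum', hH, Finset.mul_sum]
    apply Finset.sum_lt_sum_of_nonempty
    · exact Finset.nonempty_Icc.2 hm
    · intro c hc
      rw [Finset.mem_Icc] at hc
      have hcpos : (0:ℝ) < c := by exact_mod_cast hc.1
      have := h c hc.1 hc.2
      rw [mul_one_div, lt_div_iff₀ hcpos]
      linarith [this]
  have final : s * (harmonic m : ℝ) ≤ (k' : ℝ) := by
    calc s * (harmonic m : ℝ) ≤ s * (1 + Real.log k') := by
          apply mul_le_mul_of_nonneg_left _ hspos.le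
          linarith
    _ = k' := by rw [hs]; field_simp
  linarith
end
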